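/- arXiv:1208.1536 — 3 statements merged into one kernel-verified Lean document; each statement's English description precedes it below -/
import Mathlib

section
/- Let X be a compact metrizable topological space and f : X → X a homeomorphism. If f is R-closed, then for every positive integer n the iterate f^n is also R-closed. -/
open Set Metric Filter Topology
set_option linter.unusedSectionVars false

/-- The `ℤ`-orbit of a point `x` under a bijection `g` : `O_g(x) = {gᵏ x : k ∈ ℤ}`. -/
def zOrbit {X : Type*} (g : Equiv.Perm X) (x : X) : Set X :=
  Set.range fun k : ℤ => (g ^ k) x

/-- A map is R-closed if the relation `R = {(x,y) : y ∈ closure (O(x))}` is closed. -/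
def RClosed {X : Type*} [TopologicalSpace X] (g : Equiv.Perm X) : Prop :=
  IsClosed {p : X × X | p.2 ∈ closure (zOrbit g p.1)}

namespace RCAux

variable {X : Type*}

lemma pow_zpow (g : Equiv.Perm X) (n : ℕ) (k : ℤ) : (g ^ n) ^ k = g ^ ((n : ℤ) * k) := by
  rw [← zpow_natCast g n, ← zpow_mul]

lemma zpow_apply_mem (g : Equiv.Perm X) (x : X) (k : ℤ) : (g ^ k) x ∈ zOrbit g x := ⟨k, rfl⟩

lemma self_mem_zOrbit (g : Equiv.Perm X) (x : X) : x ∈ zOrbit g x := by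
  simpa using zpow_apply_mem g x 0

lemma image_zOrbit (g : Equiv.Perm X) (k : ℤ) (x : X) :
    ⇑(g ^ k) '' zOrbit g x = zOrbit g x := by
  ext y
  constructor
  · rintro ⟨z, ⟨m, rfl⟩, rfl⟩
    exact ⟨k + m, by simp [zpow_add, Equiv.Perm.mul_apply]⟩
  · rintro ⟨m, rfl⟩
    refine ⟨(g ^ (m - k)) x, ⟨m - k, rfl⟩, ?_⟩
    simp only [← Equiv.Perm.mul_apply, ← zpow_add, add_sub_cancel]

lemma zOrbit_pow_subset (g : Equiv.Perm X) (n : ℕ) (x : X) :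
    zOrbit (g ^ n) x ⊆ zOrbit g x := by
  rintro y ⟨m, rfl⟩
  exact ⟨(n : ℤ) * m, by simp only [← pow_zpow]⟩

section Topology

variable [MetricSpace X] [CompactSpace X]

lemma cont_pow_nat (f : X ≃ₜ X) (m : ℕ) : Continuous fun z => (f.toEquiv ^ m) z := by
  induction m with
  | zero => simp only [pow_zero, Equiv.Perm.coe_one]; exact continuous_id
  | succ m ih =>
    have : (fun z => (f.toEquiv ^ (m + 1)) z) = fun z => (f.toEquiv ^ m) (f.toEquiv z) := by
      funext z; rw [pow_succ, Equiv.Perm.mul_apply]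
    rw [this]
    exact ih.comp f.continuous

lemma cont_zpow (f : X ≃ₜ X) (k : ℤ) : Continuous fun z => (f.toEquiv ^ k) z := by
  rcases k with m | m
  · simpa [zpow_natCast] using cont_pow_nat f m
  · have h1 : f.toEquiv ^ (Int.negSucc m) = f.symm.toEquiv ^ (m + 1) := by
      rw [zpow_negSucc, ← inv_pow]
      rfl
    rw [h1]
    exact cont_pow_nat f.symm (m + 1)

/-- `f ^ k` as a homeomorphism. -/
def hpow (f : X ≃ₜ X) (k : ℤ) : X ≃ₜ X where
  toEquiv := f.toEquiv ^ k
  continuous_toFun := cont_zpow f k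
  continuous_invFun := by
    show Continuous ⇑(f.toEquiv ^ k).symm
    have : ⇑(f.toEquiv ^ k).symm = ⇑(f.toEquiv ^ (-k)) := by
      rw [zpow_neg, ← Equiv.Perm.inv_def]
    rw [this]
    exact cont_zpow f (-k)

@[simp] lemma hpow_coe (f : X ≃ₜ X) (k : ℤ) : ⇑(hpow f k) = ⇑(f.toEquiv ^ k) := rfl

lemma image_closure_zpow (f : X ≃ₜ X) (k : ℤ) (S : Set X) :
    ⇑(f.toEquiv ^ k) '' closure S = closure (⇑(f.toEquiv ^ k) '' S) :=
  (hpow f k).image_closure S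

/-- orbit closure -/
def ocl (f : X ≃ₜ X) (x : X) : Set X := closure (zOrbit f.toEquiv x)

lemma mem_ocl_self (f : X ≃ₜ X) (x : X) : x ∈ ocl f x :=
  subset_closure (self_mem_zOrbit _ x)

lemma ocl_nonempty (f : X ≃ₜ X) (x : X) : (ocl f x).Nonempty := ⟨x, mem_ocl_self f x⟩

lemma isClosed_ocl (f : X ≃ₜ X) (x : X) : IsClosed (ocl f x) := isClosed_closure

/-- invariance of a set under all integer powers -/
def Inv (f : X ≃ₜ X) (K : Set X) : Prop := ∀ k : ℤ, ⇑(f.toEquiv ^ k) '' K ⊆ K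

lemma inv_image_eq {f : X ≃ₜ X} {K : Set X} (hK : Inv f K) (k : ℤ) :
    ⇑(f.toEquiv ^ k) '' K = K := by
  refine subset_antisymm (hK k) ?_
  have h2 := Set.image_mono (f := ⇑(f.toEquiv ^ k)) (hK (-k))
  rw [← Set.image_comp] at h2
  have h3 : ⇑(f.toEquiv ^ k) ∘ ⇑(f.toEquiv ^ (-k)) = id := by
    funext z
    simp only [Function.comp_apply, ← Equiv.Perm.mul_apply, ← zpow_add, add_neg_cancel,
      zpow_zero, Equiv.Perm.coe_one, id_eq]
  rw [h3, Set.image_id] at h2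
  exact h2

lemma inv_ocl (f : X ≃ₜ X) (x : X) : Inv f (ocl f x) := by
  intro k
  rw [ocl, image_closure_zpow, image_zOrbit]

lemma ocl_subset_of_inv {f : X ≃ₜ X} {K : Set X} (hK : Inv f K) (hcl : IsClosed K)
    {z : X} (hz : z ∈ K) : ocl f z ⊆ K := by
  refine closure_minimal ?_ hcl
  rintro w ⟨m, rfl⟩
  exact hK m ⟨z, hz, rfl⟩

lemma ocl_subset_of_mem {f : X ≃ₜ X} {x z : X} (hz : z ∈ ocl f x) : ocl f z ⊆ ocl f x :=
  ocl_subset_of_inv (inv_ocl f x) (isClosed_ocl f x) hz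

/-- symmetry of the orbit closure relation, from R-closedness -/
lemma mem_ocl_symm {f : X ≃ₜ X} (hf : RClosed f.toEquiv) {x y : X}
    (hy : y ∈ ocl f x) : x ∈ ocl f y := by
  obtain ⟨u, hu, hulim⟩ := mem_closure_iff_seq_limit.1 hy
  have hmem : ∀ i, (u i, x) ∈ {p : X × X | p.2 ∈ closure (zOrbit f.toEquiv p.1)} := by
    intro i
    obtain ⟨k, hk⟩ := hu i
    refine subset_closure ⟨-k, ?_⟩
    simp only [← hk, ← Equiv.Perm.mul_apply, ← zpow_add, neg_add_cancel, zpow_zero,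
      Equiv.Perm.coe_one, id_eq]
  have : Tendsto (fun i => (u i, x)) atTop (nhds (y, x)) :=
    hulim.prodMk_nhds tendsto_const_nhds
  exact hf.isSeqClosed hmem this

lemma ocl_eq_of_mem {f : X ≃ₜ X} (hf : RClosed f.toEquiv) {x z : X}
    (hz : z ∈ ocl f x) : ocl f z = ocl f x :=
  subset_antisymm (ocl_subset_of_mem hz) (ocl_subset_of_mem (mem_ocl_symm hf hz))

/-- minimal invariant set -/
def IsMinl (f : X ≃ₜ X) (M : Set X) : Prop :=
  M.Nonempty ∧ IsClosed M ∧ Inv f M ∧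
    ∀ K, K ⊆ M → K.Nonempty → IsClosed K → Inv f K → K = M

lemma exists_minl (f : X ≃ₜ X) {K : Set X} (hne : K.Nonempty) (hcl : IsClosed K)
    (hinv : Inv f K) : ∃ M, M ⊆ K ∧ IsMinl f M := by
  set S : Set (Set X) := {A | A.Nonempty ∧ IsClosed A ∧ Inv f A} with hS
  have hzorn := zorn_superset_nonempty S ?_ K ⟨hne, hcl, hinv⟩
  · obtain ⟨M, hMK, hMmin⟩ := hzorn
    refine ⟨M, hMK, hMmin.1.1, hMmin.1.2.1, hMmin.1.2.2, ?_⟩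
    intro K' hK'M hK'ne hK'cl hK'inv
    exact subset_antisymm hK'M (hMmin.2 ⟨hK'ne, hK'cl, hK'inv⟩ hK'M)
  · intro c hcS hchain hcne
    refine ⟨⋂₀ c, ⟨?_, ?_, ?_⟩, fun s hs => sInter_subset_of_mem hs⟩
    · haveI : Nonempty c := hcne.to_subtype
      rw [sInter_eq_iInter]
      refine IsCompact.nonempty_iInter_of_directed_nonempty_isCompact_isClosed
        (fun A : c => (A : Set X)) ?_ ?_ ?_ ?_
      · rintro ⟨A, hA⟩ ⟨B, hB⟩
        rcases hchain.total hA hB with h | h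
        · exact ⟨⟨A, hA⟩, subset_rfl, h⟩
        · exact ⟨⟨B, hB⟩, h, subset_rfl⟩
      · exact fun A => (hcS A.2).1
      · exact fun A => ((hcS A.2).2.1).isCompact
      · exact fun A => (hcS A.2).2.1
    · exact isClosed_sInter fun A hA => (hcS hA).2.1
    · intro k
      rintro z ⟨w, hw, rfl⟩
      intro A hA
      exact (hcS hA).2.2 k ⟨w, hw A hA, rfl⟩

lemma ocl_eq_of_mem_minl {f : X ≃ₜ X} {M : Set X} (hM : IsMinl f M) {z : X}
    (hz : z ∈ M) : ocl f z = M :=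
  hM.2.2.2 _ (ocl_subset_of_inv hM.2.2.1 hM.2.1 hz) (ocl_nonempty f z)
    (isClosed_ocl f z) (inv_ocl f z)

lemma minl_disjoint {f : X ≃ₜ X} {A B : Set X} (hA : IsMinl f A) (hB : IsMinl f B)
    (hne : A ≠ B) : Disjoint A B := by
  by_contra hd
  obtain ⟨z, hzA, hzB⟩ := Set.not_disjoint_iff.1 hd
  exact hne ((ocl_eq_of_mem_minl hA hzA).symm.trans (ocl_eq_of_mem_minl hB hzB))

lemma minl_ocl_of_rclosed {f : X ≃ₜ X} (hf : RClosed f.toEquiv) (x : X) :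
    IsMinl f (ocl f x) := by
  refine ⟨ocl_nonempty f x, isClosed_ocl f x, inv_ocl f x, ?_⟩
  intro K hKM hKne hKcl hKinv
  obtain ⟨z, hz⟩ := hKne
  have h1 : ocl f z = ocl f x := ocl_eq_of_mem hf (hKM hz)
  have h2 : ocl f z ⊆ K := ocl_subset_of_inv hKinv hKcl hz
  exact subset_antisymm hKM (h1 ▸ h2)

/-- `f ^ n` (natural power) as a homeomorphism -/
def powHomeo (f : X ≃ₜ X) (n : ℕ) : X ≃ₜ X where
  toEquiv := f.toEquiv ^ n
  continuous_toFun := cont_pow_nat f n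
  continuous_invFun := by
    show Continuous ⇑(f.toEquiv ^ n).symm
    have : ⇑(f.toEquiv ^ n).symm = ⇑(f.symm.toEquiv ^ n) := by
      rw [← Equiv.Perm.inv_def, ← inv_pow]
      rfl
    rw [this]
    exact cont_pow_nat f.symm n

@[simp] lemma powHomeo_toEquiv (f : X ≃ₜ X) (n : ℕ) :
    (powHomeo f n).toEquiv = f.toEquiv ^ n := rfl

/-- powers of `powHomeo f n` expressed through powers of `f` -/
lemma powHomeo_zpow_coe (f : X ≃ₜ X) (n : ℕ) (k : ℤ) :
    ((powHomeo f n).toEquiv ^ k) = f.toEquiv ^ ((n : ℤ) * k) := by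
  rw [powHomeo_toEquiv, pow_zpow]

/-- decomposition of the f-orbit into pieces of the fⁿ-orbit -/
lemma zOrbit_decomp (f : X ≃ₜ X) {n : ℕ} (hn : 0 < n) (z : X) :
    zOrbit f.toEquiv z =
      ⋃ j ∈ Finset.range n, ⇑(f.toEquiv ^ (j : ℤ)) '' zOrbit (f.toEquiv ^ n) z := by
  ext y
  simp only [Set.mem_iUnion]
  constructor
  · rintro ⟨k, rfl⟩
    have hn' : (0:ℤ) < n := by exact_mod_cast hn
    refine ⟨(k % n).toNat, ?_, ((f.toEquiv ^ n) ^ (k / (n:ℤ))) z, ⟨k / n, rfl⟩, ?_⟩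
    · rw [Finset.mem_range]
      have h1 : k % (n:ℤ) < n := Int.emod_lt_of_pos k hn'
      omega
    · have h0 : (0:ℤ) ≤ k % n := Int.emod_nonneg k (by omega)
      have htn : (((k % (n:ℤ)).toNat : ℤ)) = k % n := Int.toNat_of_nonneg h0
      rw [htn, pow_zpow, ← Equiv.Perm.mul_apply, ← zpow_add]
      congr 2
      exact Int.emod_add_mul_ediv k n
  · rintro ⟨j, hj, w, ⟨q, rfl⟩, rfl⟩
    refine ⟨(j : ℤ) + (n : ℤ) * q, ?_⟩
    simp only [pow_zpow, ← Equiv.Perm.mul_apply, ← zpow_add]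

lemma ocl_decomp (f : X ≃ₜ X) {n : ℕ} (hn : 0 < n) (z : X) :
    ocl f z = ⋃ j ∈ Finset.range n, ⇑(f.toEquiv ^ (j : ℤ)) '' ocl (powHomeo f n) z := by
  rw [ocl, zOrbit_decomp f hn z, Finset.closure_biUnion]
  refine Set.iUnion₂_congr fun j hj => ?_
  rw [ocl, ← image_closure_zpow]
  rfl

/-- an image of a minimal set under a commuting power is minimal -/
lemma minl_image {f : X ≃ₜ X} {n : ℕ} {K : Set X} (hK : IsMinl (powHomeo f n) K) (j : ℤ) :
    IsMinl (powHomeo f n) (⇑(f.toEquiv ^ j) '' K) := by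
  have hcomm : ∀ (j k : ℤ) (S : Set X),
      ⇑((powHomeo f n).toEquiv ^ k) '' (⇑(f.toEquiv ^ j) '' S)
        = ⇑(f.toEquiv ^ j) '' (⇑((powHomeo f n).toEquiv ^ k) '' S) := by
    intro j k S
    rw [← Set.image_comp, ← Set.image_comp]
    funext w
    simp only [Function.comp_apply, powHomeo_zpow_coe, ← Equiv.Perm.mul_apply, ← zpow_add]
    congr 2
    ring
  obtain ⟨hne, hcl, hinv, hmin⟩ := hK
  refine ⟨hne.image _, ((hpow f j).isClosedMap _ hcl), ?_, ?_⟩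
  · intro k
    rw [hcomm j k K, inv_image_eq hinv k]
  · intro K' hK'sub hK'ne hK'cl hK'inv
    have hback : ⇑(f.toEquiv ^ (-j)) '' K' ⊆ K := by
      have := Set.image_mono (f := ⇑(f.toEquiv ^ (-j))) hK'sub
      rwa [← Set.image_comp, (by funext w; simp only [Function.comp_apply, ← Equiv.Perm.mul_apply, ← zpow_add, neg_add_cancel, zpow_zero, Equiv.Perm.coe_one, id_eq] :
        ⇑(f.toEquiv ^ (-j)) ∘ ⇑(f.toEquiv ^ j) = id), Set.image_id] at this
    have hbeq : ⇑(f.toEquiv ^ (-j)) '' K' = K := by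
      refine hmin _ hback (hK'ne.image _) ((hpow f (-j)).isClosedMap _ hK'cl) ?_
      intro k
      rw [hcomm (-j) k K']
      exact Set.image_mono (hK'inv k)
    calc K' = ⇑(f.toEquiv ^ j) '' (⇑(f.toEquiv ^ (-j)) '' K') := by
              rw [← Set.image_comp, (by funext w; simp only [Function.comp_apply, ← Equiv.Perm.mul_apply, ← zpow_add, add_neg_cancel, zpow_zero, Equiv.Perm.coe_one, id_eq] :
                ⇑(f.toEquiv ^ j) ∘ ⇑(f.toEquiv ^ (-j)) = id), Set.image_id]
      _ = ⇑(f.toEquiv ^ j) '' K := by rw [hbeq]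

/-- The key lemma: the fⁿ-orbit closure of any point is fⁿ-minimal, when f is R-closed. -/
lemma minl_ocl_pow {f : X ≃ₜ X} (hf : RClosed f.toEquiv) {n : ℕ} (hn : 0 < n) (x : X) :
    IsMinl (powHomeo f n) (ocl (powHomeo f n) x) := by
  set h := powHomeo f n with hh
  set C := ocl h x with hC
  have hCM : C ⊆ ocl f x := by
    apply closure_mono
    rw [powHomeo_toEquiv]
    exact zOrbit_pow_subset f.toEquiv n x
  obtain ⟨K, hKC, hKmin⟩ := exists_minl h (ocl_nonempty h x) (isClosed_ocl h x) (inv_ocl h x)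
  obtain ⟨z, hz⟩ := hKmin.1
  have hzM : z ∈ ocl f x := hCM (hKC hz)
  have hdec : ocl f z = ⋃ j ∈ Finset.range n, ⇑(f.toEquiv ^ (j : ℤ)) '' ocl h z :=
    ocl_decomp f hn z
  have hoclz : ocl h z = K := ocl_eq_of_mem_minl hKmin hz
  have hxM : x ∈ ocl f z := by rw [ocl_eq_of_mem hf hzM]; exact mem_ocl_self f x
  rw [hdec, hoclz] at hxM
  simp only [Set.mem_iUnion] at hxM
  obtain ⟨j, _, hxj⟩ := hxM
  have hjmin : IsMinl h (⇑(f.toEquiv ^ (j:ℤ)) '' K) := minl_image hKmin j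
  have hCsub : C ⊆ ⇑(f.toEquiv ^ (j:ℤ)) '' K :=
    ocl_subset_of_inv hjmin.2.2.1 hjmin.2.1 hxj
  have hCeq : C = ⇑(f.toEquiv ^ (j:ℤ)) '' K :=
    hjmin.2.2.2 _ hCsub (ocl_nonempty h x) (isClosed_ocl h x) (inv_ocl h x)
  show IsMinl h C
  rw [hCeq]
  exact hjmin

/-- upper semicontinuity of orbit closures, from R-closedness -/
lemma usc_ocl {f : X ≃ₜ X} (hf : RClosed f.toEquiv) {x : X} {xs : ℕ → X}
    (hxs : Tendsto xs atTop (nhds x)) {U : Set X} (hU : IsOpen U)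
    (hMU : ocl f x ⊆ U) : ∀ᶠ k in atTop, ocl f (xs k) ⊆ U := by
  by_contra hcon
  have hfreq : ∃ᶠ k in atTop, ∃ z, z ∈ ocl f (xs k) ∧ z ∉ U := by
    rw [Filter.not_eventually] at hcon
    refine hcon.mono fun k hk => ?_
    obtain ⟨z, hz1, hz2⟩ := Set.not_subset.1 hk
    exact ⟨z, hz1, hz2⟩
  obtain ⟨φ, hφ, hP⟩ := Filter.extraction_of_frequently_atTop hfreq
  choose zs hzs hzU using hP
  obtain ⟨a, -, ψ, hψ, hψlim⟩ := isCompact_univ.tendsto_subseq (x := zs) (fun i => mem_univ _)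
  have hmem : ∀ i, (xs (φ (ψ i)), zs (ψ i)) ∈
      {p : X × X | p.2 ∈ closure (zOrbit f.toEquiv p.1)} := fun i => hzs (ψ i)
  have hx2 : Tendsto (fun i => xs (φ (ψ i))) atTop (nhds x) :=
    hxs.comp ((hφ.comp hψ).tendsto_atTop)
  have hlim : Tendsto (fun i => (xs (φ (ψ i)), zs (ψ i))) atTop (nhds (x, a)) :=
    hx2.prodMk_nhds hψlim
  have haR : a ∈ ocl f x := hf.isSeqClosed hmem hlim
  have haU : a ∈ U := hMU haR
  have : a ∈ Uᶜ := hU.isClosed_compl.mem_of_tendsto hψlim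
    (Filter.Eventually.of_forall fun i => hzU (ψ i))
  exact this haU

/-- a uniform positive ε for finitely many conditions, each antitone -/
lemma exists_pos_forall_finset {α : Type*} (s : Finset α) (P : α → ℝ → Prop)
    (hmono : ∀ a ε ε', 0 < ε → ε ≤ ε' → P a ε' → P a ε)
    (h : ∀ a ∈ s, ∃ ε > 0, P a ε) : ∃ ε > 0, ∀ a ∈ s, P a ε := by
  classical
  induction s using Finset.induction with
  | empty => exact ⟨1, one_pos, by simp⟩
  | @insert a s ha ih =>
    obtain ⟨ε₁, hε₁, hP₁⟩ := h _ (Finset.mem_insert_self _ _)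
    obtain ⟨ε₂, hε₂, hP₂⟩ := ih fun b hb => h b (Finset.mem_insert_of_mem hb)
    refine ⟨min ε₁ ε₂, lt_min hε₁ hε₂, ?_⟩
    intro b hb
    rcases Finset.mem_insert.1 hb with rfl | hb
    · exact hmono _ _ _ (lt_min hε₁ hε₂) (min_le_left _ _) hP₁
    · exact hmono _ _ _ (lt_min hε₁ hε₂) (min_le_right _ _) (hP₂ b hb)

lemma zpow_image_comp (f : X ≃ₜ X) (i j : ℤ) (S : Set X) :
    ⇑(f.toEquiv ^ i) '' (⇑(f.toEquiv ^ j) '' S) = ⇑(f.toEquiv ^ (i + j)) '' S := by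
  rw [← Set.image_comp]
  congr 1
  funext w
  simp only [Function.comp_apply, ← Equiv.Perm.mul_apply, ← zpow_add]

end Topology

end RCAux

open RCAux in
/-- If a homeomorphism `f` of a compact metrizable space is R-closed, then so is `fⁿ`
for every positive integer `n`. -/
theorem rclosed_pow_of_rclosed {X : Type*} [TopologicalSpace X] [CompactSpace X]
    [TopologicalSpace.MetrizableSpace X] (f : X ≃ₜ X) (hf : RClosed f.toEquiv)
    (n : ℕ) (hn : 0 < n) : RClosed (f.toEquiv ^ n) := by
  letI : MetricSpace X := TopologicalSpace.metrizableSpaceMetric X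
  rw [RClosed, ← isSeqClosed_iff_isClosed]
  intro u p hu hup
  have hn' : (0:ℤ) < (n:ℤ) := by exact_mod_cast hn
  set g := f.toEquiv with hg
  set xs : ℕ → X := fun k => (u k).1 with hxsdef
  set ys : ℕ → X := fun k => (u k).2 with hysdef
  have hxs : Tendsto xs atTop (nhds p.1) := (continuous_fst.tendsto p).comp hup
  have hys : Tendsto ys atTop (nhds p.2) := (continuous_snd.tendsto p).comp hup
  set h : X ≃ₜ X := powHomeo f n with hh
  set C : Set X := ocl h p.1 with hC
  set M : Set X := ocl f p.1 with hM
  set D : ℤ → Set X := fun j => ⇑(g ^ j) '' C with hD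
  show p.2 ∈ C
  have hCmin : IsMinl h C := minl_ocl_pow hf hn p.1
  have hDmin : ∀ j : ℤ, IsMinl h (D j) := fun j => minl_image hCmin j
  have hD0 : D 0 = C := by
    simp only [hD, zpow_zero, Equiv.Perm.coe_one, Set.image_id]
  have hDadd : ∀ i j : ℤ, D (i + j) = ⇑(g ^ i) '' D j := by
    intro i j
    rw [hD]
    simp only
    rw [zpow_image_comp f i j C]
  have hDn : ∀ t : ℤ, D ((n:ℤ) * t) = C := by
    intro t
    show ⇑(g ^ ((n:ℤ) * t)) '' C = C
    rw [← powHomeo_zpow_coe f n t]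
    exact inv_image_eq (inv_ocl h p.1) t
  have hDmod : ∀ j : ℤ, D j = D (j % (n:ℤ)) := by
    intro j
    have hj : j % (n:ℤ) + (n:ℤ) * (j / (n:ℤ)) = j := Int.emod_add_mul_ediv j n
    calc D j = D (j % (n:ℤ) + (n:ℤ) * (j / (n:ℤ))) := by rw [hj]
      _ = ⇑(g ^ (j % (n:ℤ))) '' D ((n:ℤ) * (j / (n:ℤ))) := hDadd _ _
      _ = ⇑(g ^ (j % (n:ℤ))) '' C := by rw [hDn]
      _ = D (j % (n:ℤ)) := rfl
  have hMdec : M = ⋃ j ∈ Finset.range n, D (j:ℤ) := ocl_decomp f hn p.1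
  -- y is in M
  have hyM : p.2 ∈ M := by
    have hmem : ∀ k, u k ∈ {q : X × X | q.2 ∈ closure (zOrbit g q.1)} := fun k =>
      closure_mono (zOrbit_pow_subset g n _) (hu k)
    exact hf.isSeqClosed hmem hup
  -- separation constant
  obtain ⟨ε, hε, hsep⟩ : ∃ ε > 0, ∀ q ∈ Finset.range n ×ˢ Finset.range n,
      (D (q.1:ℤ) ≠ D (q.2:ℤ) →
        Disjoint (thickening ε (D (q.1:ℤ))) (thickening ε (D (q.2:ℤ)))) := by
    refine exists_pos_forall_finset _ _ ?_ ?_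
    · intro q ε ε' hε hle hP hne
      exact (hP hne).mono (thickening_mono hle _) (thickening_mono hle _)
    · rintro ⟨i, j⟩ -
      by_cases hne : D (i:ℤ) = D (j:ℤ)
      · exact ⟨1, one_pos, fun hc => absurd hne hc⟩
      · obtain ⟨δ', hδ', hdisj⟩ := Disjoint.exists_thickenings
          (minl_disjoint (hDmin i) (hDmin j) hne) ((hDmin (i:ℤ)).2.1).isCompact
          (hDmin (j:ℤ)).2.1
        exact ⟨δ', hδ', fun _ => hdisj⟩
  -- uniform continuity constant
  obtain ⟨δ₁, hδ₁, hfc⟩ := Metric.uniformContinuous_iff.1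
    (CompactSpace.uniformContinuous_of_continuous f.continuous) ε hε
  obtain ⟨δ₂, hδ₂, hfc'⟩ := Metric.uniformContinuous_iff.1
    (CompactSpace.uniformContinuous_of_continuous f.symm.continuous) ε hε
  set δ : ℝ := min (min δ₁ δ₂) (ε/2) with hδdef
  have hδpos : 0 < δ := lt_min (lt_min hδ₁ hδ₂) (by positivity)
  have hδε : δ ≤ ε := le_trans (min_le_right _ _) (by linarith)
  have hδltε : δ < ε := lt_of_le_of_lt (min_le_right _ _) (by linarith)
  have hδ1 : δ ≤ δ₁ := le_trans (min_le_left _ _) (min_le_left _ _)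
  have hδ2 : δ ≤ δ₂ := le_trans (min_le_left _ _) (min_le_right _ _)
  -- the open neighbourhood W of M
  set W : Set X := ⋃ j ∈ Finset.range n, thickening δ (D (j:ℤ)) with hW
  have hWopen : IsOpen W := isOpen_biUnion fun _ _ => isOpen_thickening
  have hMW : M ⊆ W := by
    rw [hMdec]
    exact Set.iUnion₂_mono fun j hj => self_subset_thickening hδpos _
  have hev1 : ∀ᶠ k in atTop, ocl f (xs k) ⊆ W := usc_ocl hf hxs hWopen hMW
  have hev2 : ∀ᶠ k in atTop, xs k ∈ Metric.ball p.1 δ := hxs (Metric.ball_mem_nhds p.1 hδpos)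
  -- the key estimate along the sequence
  have key : ∀ᶠ k in atTop, ys k ∈ cthickening δ C := by
    filter_upwards [hev1, hev2] with k hk1 hk2
    have horbW : ∀ z ∈ zOrbit g (xs k), z ∈ W := fun z hz => hk1 (subset_closure hz)
    -- forward step
    have hstepF : ∀ z ∈ zOrbit g (xs k), ∀ j : ℤ,
        z ∈ thickening δ (D j) → g z ∈ thickening δ (D (j + 1)) := by
      intro z hz j hzj
      obtain ⟨w, hwD, hdw⟩ := Metric.mem_thickening_iff.1 hzj
      have hd2 : dist (g z) (g w) < ε := hfc (lt_of_lt_of_le hdw hδ1)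
      have hgw : g w ∈ D (j + 1) := by
        rw [show j + 1 = 1 + j by ring, hDadd 1 j]
        exact ⟨w, hwD, by rw [zpow_one]⟩
      have hthick : g z ∈ thickening ε (D (j + 1)) :=
        Metric.mem_thickening_iff.2 ⟨_, hgw, hd2⟩
      have hzo : g z ∈ zOrbit g (xs k) := by
        obtain ⟨m, rfl⟩ := hz
        exact ⟨1 + m, by simp [zpow_add, zpow_one, Equiv.Perm.mul_apply]⟩
      obtain ⟨i, hi, hzi⟩ : ∃ i ∈ Finset.range n, g z ∈ thickening δ (D (i:ℤ)) := by
        have := horbW _ hzo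
        rw [hW] at this
        simpa using this
      set j' : ℕ := ((j + 1) % (n:ℤ)).toNat with hj'def
      have hj'cast : ((j' : ℤ)) = (j + 1) % (n:ℤ) :=
        Int.toNat_of_nonneg (Int.emod_nonneg _ (by omega))
      have hDj' : D (j + 1) = D (j':ℤ) := by rw [hj'cast, ← hDmod]
      have hj'range : j' ∈ Finset.range n := by
        rw [Finset.mem_range]
        have := Int.emod_lt_of_pos (j + 1) hn'
        omega
      by_cases heq : D (i:ℤ) = D (j':ℤ)
      · rw [hDj', ← heq]
        exact hzi
      · exfalso
        have hdisj := hsep (i, j') (Finset.mem_product.2 ⟨hi, hj'range⟩) heq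
        exact Set.disjoint_left.1 hdisj (thickening_mono hδε _ hzi)
          (by rw [← hDj']; exact hthick)
    -- backward step
    have hstepB : ∀ z ∈ zOrbit g (xs k), ∀ j : ℤ,
        z ∈ thickening δ (D j) → (g ^ (-1:ℤ)) z ∈ thickening δ (D (j - 1)) := by
      intro z hz j hzj
      obtain ⟨w, hwD, hdw⟩ := Metric.mem_thickening_iff.1 hzj
      have hcoe : ∀ v : X, (g ^ (-1:ℤ)) v = f.symm v := fun v => by
        rw [zpow_neg_one]; rfl
      have hd2 : dist ((g ^ (-1:ℤ)) z) ((g ^ (-1:ℤ)) w) < ε := by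
        rw [hcoe, hcoe]
        exact hfc' (lt_of_lt_of_le hdw hδ2)
      have hgw : (g ^ (-1:ℤ)) w ∈ D (j - 1) := by
        rw [show j - 1 = -1 + j by ring, hDadd (-1) j]
        exact ⟨w, hwD, rfl⟩
      have hthick : (g ^ (-1:ℤ)) z ∈ thickening ε (D (j - 1)) :=
        Metric.mem_thickening_iff.2 ⟨_, hgw, hd2⟩
      have hzo : (g ^ (-1:ℤ)) z ∈ zOrbit g (xs k) := by
        obtain ⟨m, rfl⟩ := hz
        exact ⟨-1 + m, by simp [zpow_add, Equiv.Perm.mul_apply]⟩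
      obtain ⟨i, hi, hzi⟩ : ∃ i ∈ Finset.range n, (g ^ (-1:ℤ)) z ∈ thickening δ (D (i:ℤ)) := by
        have := horbW _ hzo
        rw [hW] at this
        simpa using this
      set j' : ℕ := ((j - 1) % (n:ℤ)).toNat with hj'def
      have hj'cast : ((j' : ℤ)) = (j - 1) % (n:ℤ) :=
        Int.toNat_of_nonneg (Int.emod_nonneg _ (by omega))
      have hDj' : D (j - 1) = D (j':ℤ) := by rw [hj'cast, ← hDmod]
      have hj'range : j' ∈ Finset.range n := by
        rw [Finset.mem_range]
        have := Int.emod_lt_of_pos (j - 1) hn'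
        omega
      by_cases heq : D (i:ℤ) = D (j':ℤ)
      · rw [hDj', ← heq]
        exact hzi
      · exfalso
        have hdisj := hsep (i, j') (Finset.mem_product.2 ⟨hi, hj'range⟩) heq
        exact Set.disjoint_left.1 hdisj (thickening_mono hδε _ hzi)
          (by rw [← hDj']; exact hthick)
    -- induction along the orbit
    have hx0 : xs k ∈ thickening δ C :=
      Metric.mem_thickening_iff.2 ⟨p.1, mem_ocl_self h p.1, by
        simpa [Metric.mem_ball] using hk2⟩
    have hind : ∀ s : ℕ, (g ^ (s:ℤ)) (xs k) ∈ thickening δ (D (s:ℤ)) ∧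
        (g ^ (-(s:ℤ))) (xs k) ∈ thickening δ (D (-(s:ℤ))) := by
      intro s
      induction s with
      | zero =>
        constructor <;> · simpa [hD0] using hx0
      | succ s ih =>
        constructor
        · have hstep := hstepF _ ⟨(s:ℤ), rfl⟩ (s:ℤ) ih.1
          have hpt : g ((g ^ (s:ℤ)) (xs k)) = (g ^ (((s+1:ℕ)):ℤ)) (xs k) := by
            push_cast
            rw [show ((s:ℤ) + 1) = 1 + s by ring, zpow_add, Equiv.Perm.mul_apply, zpow_one]
          have hidx : ((s:ℤ) + 1) = (((s+1:ℕ)):ℤ) := by push_cast; ring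
          rw [hpt, hidx] at hstep
          exact hstep
        · have hstep := hstepB _ ⟨-(s:ℤ), rfl⟩ (-(s:ℤ)) ih.2
          have hpt : (g ^ (-1:ℤ)) ((g ^ (-(s:ℤ))) (xs k)) = (g ^ (-(((s+1:ℕ)):ℤ))) (xs k) := by
            push_cast
            rw [show (-((s:ℤ) + 1)) = -1 + -s by ring, zpow_add, Equiv.Perm.mul_apply]
          have hidx : (-(s:ℤ) - 1) = (-(((s+1:ℕ)):ℤ)) := by push_cast; ring
          rw [hpt, hidx] at hstep
          exact hstep
    -- the fⁿ-orbit of xs k stays in the thickening of C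
    have horb : zOrbit (g ^ n) (xs k) ⊆ thickening δ C := by
      rintro _ ⟨m, rfl⟩
      have hrw : ((g ^ n) ^ m) (xs k) = (g ^ ((n:ℤ) * m)) (xs k) := by
        rw [pow_zpow]
      show ((g ^ n) ^ m) (xs k) ∈ thickening δ C
      rw [hrw]
      rcases le_or_gt 0 ((n:ℤ) * m) with hm | hm
      · have hs : ((((n:ℤ)*m).toNat : ℤ)) = (n:ℤ) * m := Int.toNat_of_nonneg hm
        have := (hind ((n:ℤ)*m).toNat).1
        rw [hs] at this
        rwa [show D ((n:ℤ)*m) = C from hDn m] at this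
      · have hs : (-(((-( (n:ℤ)*m)).toNat : ℤ))) = (n:ℤ) * m := by
          rw [Int.toNat_of_nonneg (by omega)]; ring
        have := (hind ((-( (n:ℤ)*m)).toNat)).2
        rw [hs] at this
        rwa [show D ((n:ℤ)*m) = C from hDn m] at this
    have h1 : closure (zOrbit (g ^ n) (xs k)) ⊆ cthickening δ C :=
      closure_minimal (horb.trans (thickening_subset_cthickening δ C))
        isClosed_cthickening
    exact h1 (hu k)
  have hyC : p.2 ∈ cthickening δ C := isClosed_cthickening.mem_of_tendsto hys key
  -- conclude
  rw [hMdec] at hyM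
  simp only [Set.mem_iUnion] at hyM
  obtain ⟨j, hj, hyj⟩ := hyM
  by_cases hDj : D (j:ℤ) = D ((0:ℕ):ℤ)
  · rw [hDj] at hyj
    rwa [show D ((0:ℕ):ℤ) = C by rw [Nat.cast_zero, hD0]] at hyj
  · exfalso
    have h0range : (0:ℕ) ∈ Finset.range n := Finset.mem_range.2 hn
    have hdisj := hsep (j, 0) (Finset.mem_product.2 ⟨hj, h0range⟩) hDj
    have hy1 : p.2 ∈ thickening ε (D (j:ℤ)) := self_subset_thickening hε _ hyj
    have hy2 : p.2 ∈ thickening ε (D ((0:ℕ):ℤ)) := by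
      rw [show D ((0:ℕ):ℤ) = C by rw [Nat.cast_zero, hD0]]
      exact cthickening_subset_thickening' hε hδltε _ hyC
    exact Set.disjoint_left.1 hdisj hy1 hy2
end

section
/- Let X be a compact metrizable topological space and f : X → X an R-closed homeomorphism. Then for every positive integer n the orbit equivalence relation of f^n is L-stable: for every point x ∈ X and every open set U containing closure(O_{f^n}(x)), there exists an open set V with closure(O_{f^n}(x)) ⊆ V ⊆ U such that V is a union of f^n-orbits (i.e., V is saturated for the orbit relation of f^n). -/
namespace LStab

set_option linter.unusedSectionVars false

variable {X : Type*} [TopologicalSpace X]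

lemma zpow_apply_zpow (e : Equiv.Perm X) (s t : ℤ) (x : X) :
    (e ^ s) ((e ^ t) x) = (e ^ (s + t)) x := by
  rw [zpow_add]; rfl

lemma continuous_perm_zpow (f : X ≃ₜ X) : ∀ k : ℤ, Continuous ⇑(f.toEquiv ^ k) := by
  intro k
  induction k using Int.induction_on with
  | zero => simpa using continuous_id
  | succ i ih =>
      rw [zpow_add_one]
      exact ih.comp f.continuous
  | pred i ih =>
      rw [zpow_sub_one]
      exact ih.comp f.symm.continuous

/-- the iterate `f^k` as a homeomorphism -/
def hpow (f : X ≃ₜ X) (k : ℤ) : X ≃ₜ X where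
  toEquiv := f.toEquiv ^ k
  continuous_toFun := continuous_perm_zpow f k
  continuous_invFun := by
    have h : (f.toEquiv ^ k).symm = f.toEquiv ^ (-k) := by
      rw [← Equiv.Perm.inv_def, ← zpow_neg]
    show Continuous ⇑(f.toEquiv ^ k).symm
    rw [h]; exact continuous_perm_zpow f _

@[simp] lemma hpow_coe (f : X ≃ₜ X) (k : ℤ) : ⇑(hpow f k) = ⇑(f.toEquiv ^ k) := rfl

lemma mem_zOrbit_self (p : Equiv.Perm X) (x : X) : x ∈ zOrbit p x := ⟨0, by simp⟩

lemma zpow_mem_zOrbit (p : Equiv.Perm X) (x : X) (k : ℤ) : (p ^ k) x ∈ zOrbit p x := ⟨k, rfl⟩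

lemma zOrbit_zpow (p : Equiv.Perm X) (x : X) (k : ℤ) : zOrbit p ((p ^ k) x) = zOrbit p x := by
  ext z
  constructor
  · rintro ⟨j, rfl⟩
    exact ⟨j + k, (zpow_apply_zpow p j k x).symm⟩
  · rintro ⟨j, rfl⟩
    exact ⟨j - k, by show (p ^ (j-k)) ((p^k) x) = _; rw [zpow_apply_zpow]; ring_nf⟩

lemma image_zpow_zOrbit (e : Equiv.Perm X) (i : ℤ) (n : ℕ) (x : X) :
    ⇑(e ^ i) '' zOrbit (e ^ n) x = zOrbit (e ^ n) ((e ^ i) x) := by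
  have key : ∀ k : ℤ, (e ^ i) (((e ^ n) ^ k) x) = ((e ^ n) ^ k) ((e ^ i) x) := by
    intro k
    have h1 : ((e ^ n) ^ k : Equiv.Perm X) = e ^ ((n : ℤ) * k) := by
      rw [← zpow_natCast e n, ← zpow_mul]
    rw [h1, zpow_apply_zpow, zpow_apply_zpow, add_comm]
  ext z
  constructor
  · rintro ⟨-, ⟨k, rfl⟩, rfl⟩
    exact ⟨k, (key k).symm⟩
  · rintro ⟨k, rfl⟩
    exact ⟨((e ^ n) ^ k) x, ⟨k, rfl⟩, key k⟩

lemma image_zpow_add (e : Equiv.Perm X) (s t : ℤ) (A : Set X) :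
    ⇑(e ^ (s + t)) '' A = ⇑(e ^ s) '' (⇑(e ^ t) '' A) := by
  rw [← Set.image_comp]
  apply congrFun (congrArg _ _)
  funext z
  exact (zpow_apply_zpow e s t z).symm

/-- image of the closure of an orbit -/
lemma image_closure_zOrbit (f : X ≃ₜ X) (i : ℤ) (n : ℕ) (x : X) :
    ⇑(f.toEquiv ^ i) '' closure (zOrbit (f.toEquiv ^ n) x)
      = closure (zOrbit (f.toEquiv ^ n) ((f.toEquiv ^ i) x)) := by
  have := (hpow f i).image_closure (zOrbit (f.toEquiv ^ n) x)
  rw [hpow_coe] at this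
  rw [this, image_zpow_zOrbit]

/-- symmetry of the orbit closure relation for an R-closed map -/
lemma rclosed_symm {e : Equiv.Perm X} (hf : RClosed e) {x y : X}
    (hy : y ∈ closure (zOrbit e x)) : x ∈ closure (zOrbit e y) := by
  have hsub : (zOrbit e x) ×ˢ ({x} : Set X) ⊆ {p : X × X | p.2 ∈ closure (zOrbit e p.1)} := by
    rintro ⟨a, b⟩ ⟨⟨k, rfl⟩, hb⟩
    simp only [Set.mem_singleton_iff] at hb
    rw [Set.mem_setOf_eq, hb, zOrbit_zpow]
    exact subset_closure (mem_zOrbit_self e x)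
  have hmem : ((y, x) : X × X) ∈ closure ((zOrbit e x) ×ˢ ({x} : Set X)) := by
    rw [closure_prod_eq]
    exact ⟨hy, subset_closure rfl⟩
  have := (closure_mono hsub) hmem
  rwa [hf.closure_eq] at this

/-- orbit closures of an R-closed homeomorphism are minimal: for `y` in the orbit closure
of `x`, the two orbit closures coincide. -/
lemma rclosed_min (f : X ≃ₜ X) (hf : RClosed f.toEquiv) {x y : X}
    (hy : y ∈ closure (zOrbit f.toEquiv x)) :
    closure (zOrbit f.toEquiv y) = closure (zOrbit f.toEquiv x) := by
  set e := f.toEquiv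
  have step : ∀ a b : X, b ∈ closure (zOrbit e a) →
      closure (zOrbit e b) ⊆ closure (zOrbit e a) := by
    intro a b hb
    have horb : zOrbit e b ⊆ closure (zOrbit e a) := by
      rintro - ⟨k, rfl⟩
      have h1 : (e ^ k) b ∈ ⇑(e ^ k) '' closure (zOrbit e a) := ⟨b, hb, rfl⟩
      have h2 : ⇑(e ^ k) '' closure (zOrbit e a) = closure (zOrbit e ((e ^ k) a)) := by
        have := image_closure_zOrbit f k 1 a
        simpa [pow_one] using this
      rw [h2, zOrbit_zpow] at h1
      exact h1
    calc closure (zOrbit e b) ⊆ closure (closure (zOrbit e a)) := closure_mono horb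
      _ = closure (zOrbit e a) := closure_closure
  exact le_antisymm (step x y hy) (step y x (rclosed_symm hf hy))


/-- upper semicontinuity: for R-closed `e` on a compact T2 space, the set of points whose
orbit closure is contained in an open set `W` is open. -/
lemma usc [CompactSpace X] [T2Space X] {e : Equiv.Perm X} (hf : RClosed e)
    {W : Set X} (hW : IsOpen W) : IsOpen {y : X | closure (zOrbit e y) ⊆ W} := by
  set F : Set (X × X) := {p : X × X | p.2 ∈ closure (zOrbit e p.1)} ∩ (Set.univ ×ˢ Wᶜ)
  have hFc : IsClosed F := hf.inter (isClosed_univ.prod (isClosed_compl_iff.mpr hW))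
  have hFcmp : IsCompact F := hFc.isCompact
  have himg : IsCompact (Prod.fst '' F) := hFcmp.image continuous_fst
  have hclosed : IsClosed (Prod.fst '' F) := himg.isClosed
  have : {y : X | closure (zOrbit e y) ⊆ W} = (Prod.fst '' F)ᶜ := by
    ext y
    simp only [Set.mem_setOf_eq, Set.mem_compl_iff, Set.mem_image, not_exists]
    constructor
    · rintro h ⟨a, b⟩ ⟨⟨hab, -, hb⟩, rfl⟩
      exact hb (h hab)
    · intro h z hz
      by_contra hzW
      exact h (y, z) ⟨⟨hz, trivial, hzW⟩, rfl⟩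
  rw [this]
  exact hclosed.isOpen_compl

lemma image_inv_eq (e : Equiv.Perm X) (c : ℤ) {A : Set X} (h : ⇑(e ^ c) '' A = A) :
    ⇑(e ^ (-c)) '' A = A := by
  conv_lhs => rw [← h]
  rw [← image_zpow_add]
  simp

lemma image_mul_eq (e : Equiv.Perm X) (c : ℤ) {A : Set X} (h : ⇑(e ^ c) '' A = A) :
    ∀ k : ℤ, ⇑(e ^ (c * k)) '' A = A := by
  intro k
  induction k using Int.induction_on with
  | zero => simp
  | succ i ih =>
      rw [mul_add, mul_one, image_zpow_add, h, ih]
  | pred i ih =>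
      rw [mul_sub, mul_one, sub_eq_add_neg, image_zpow_add, image_inv_eq e c h, ih]

/-- existence of a minimal set inside a compact invariant set, by Zorn's lemma -/
lemma exists_minimal [T2Space X] (g : X ≃ₜ X) {K : Set X} (hKc : IsClosed K)
    (hKcmp : IsCompact K) (hne : K.Nonempty) (hinv : ⇑g.toEquiv '' K = K) :
    ∃ N ⊆ K, N.Nonempty ∧ IsClosed N ∧ IsCompact N ∧ ⇑g.toEquiv '' N = N ∧
      ∀ A ⊆ N, A.Nonempty → IsClosed A → ⇑g.toEquiv '' A = A → A = N := by
  set S : Set (Set X) :=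
    {A | A ⊆ K ∧ A.Nonempty ∧ IsClosed A ∧ IsCompact A ∧ ⇑g.toEquiv '' A = A}
  have hzorn := zorn_superset_nonempty S ?_ K ⟨subset_rfl, hne, hKc, hKcmp, hinv⟩
  · obtain ⟨N, hNK, hNS, hmin⟩ := hzorn
    obtain ⟨hN1, hN2, hN3, hN4, hN5⟩ := hNS
    refine ⟨N, hNK, hN2, hN3, hN4, hN5, ?_⟩
    intro A hA hA1 hA2 hA3
    exact le_antisymm hA (hmin ⟨hA.trans hN1, hA1, hA2, hN4.of_isClosed_subset hA2 hA, hA3⟩ hA)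
  · intro c hcS hchain hcne
    refine ⟨⋂₀ c, ⟨?_, ?_, ?_, ?_, ?_⟩, fun s hs => Set.sInter_subset_of_mem hs⟩
    · obtain ⟨A, hA⟩ := hcne
      exact (Set.sInter_subset_of_mem hA).trans (hcS hA).1
    · haveI : Nonempty ↥c := hcne.to_subtype
      apply IsCompact.nonempty_sInter_of_directed_nonempty_isCompact_isClosed
      · intro a ha b hb
        rcases hchain.total ha hb with h | h
        · exact ⟨a, ha, subset_rfl, h⟩
        · exact ⟨b, hb, h, subset_rfl⟩
      · exact fun A hA => (hcS hA).2.1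
      · exact fun A hA => (hcS hA).2.2.2.1
      · exact fun A hA => (hcS hA).2.2.1
    · exact isClosed_sInter fun A hA => (hcS hA).2.2.1
    · obtain ⟨A, hA⟩ := hcne
      exact (hcS hA).2.2.2.1.of_isClosed_subset
        (isClosed_sInter fun B hB => (hcS hB).2.2.1) (Set.sInter_subset_of_mem hA)
    · rw [Set.sInter_eq_iInter, Set.image_iInter g.toEquiv.bijective]
      exact Set.iInter_congr fun A => (hcS A.2).2.2.2.2


lemma pow_zpow (e : Equiv.Perm X) (n : ℕ) (k : ℤ) :
    ((e ^ n : Equiv.Perm X) ^ k) = e ^ ((n : ℤ) * k) := by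
  rw [← zpow_natCast e n, ← zpow_mul]

lemma image_closure_zOrbit_one (f : X ≃ₜ X) (i : ℤ) (x : X) :
    ⇑(f.toEquiv ^ i) '' closure (zOrbit f.toEquiv x)
      = closure (zOrbit f.toEquiv ((f.toEquiv ^ i) x)) := by
  simpa [pow_one] using image_closure_zOrbit f i 1 x

lemma image_cancel (e : Equiv.Perm X) (s : ℤ) (A : Set X) :
    ⇑(e ^ s) '' (⇑(e ^ (-s)) '' A) = A := by
  rw [← image_zpow_add]; simp

lemma image_comm (e : Equiv.Perm X) (s t : ℤ) (A : Set X) :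
    ⇑(e ^ s) '' (⇑(e ^ t) '' A) = ⇑(e ^ t) '' (⇑(e ^ s) '' A) := by
  rw [← image_zpow_add, add_comm, image_zpow_add]

/-- main structural lemma: orbit closures of `fⁿ` are minimal when `f` is R-closed. -/
lemma rclosed_pow_min [CompactSpace X] [T2Space X] (f : X ≃ₜ X) (hf : RClosed f.toEquiv)
    (n : ℕ) (hn : 0 < n) (x : X) {y : X} (hy : y ∈ closure (zOrbit (f.toEquiv ^ n) x)) :
    closure (zOrbit (f.toEquiv ^ n) y) = closure (zOrbit (f.toEquiv ^ n) x) := by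
  set e := f.toEquiv with he
  set K := closure (zOrbit (e ^ n) x) with hK
  -- invariance of K under powers of e^(n*k)
  have hKinv : ∀ k : ℤ, ⇑(e ^ ((n : ℤ) * k)) '' K = K := by
    intro k
    rw [hK, image_closure_zOrbit f ((n : ℤ) * k) n x, ← he]
    have h2 : (e ^ ((n : ℤ) * k)) x = ((e ^ n) ^ k) x := by rw [pow_zpow]
    rw [h2, zOrbit_zpow]
  have hKg : ⇑(e ^ (n : ℤ)) '' K = K := by simpa using hKinv 1
  have hKclosed : IsClosed K := isClosed_closure
  have hKcmp : IsCompact K := hKclosed.isCompact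
  have hKne : K.Nonempty := ⟨x, subset_closure (mem_zOrbit_self _ x)⟩
  -- it suffices to show K is minimal
  suffices hmin : ∀ A ⊆ K, A.Nonempty → IsClosed A → ⇑(e ^ (n : ℤ)) '' A = A → A = K by
    apply hmin
    · -- closure (zOrbit (e^n) y) ⊆ K
      have : zOrbit (e ^ n) y ⊆ K := by
        rintro - ⟨k, rfl⟩
        show ((e ^ n) ^ k) y ∈ K
        have h1 : ((e ^ n) ^ k) y ∈ ⇑((e ^ n) ^ k) '' K := ⟨y, hy, rfl⟩
        rw [pow_zpow] at h1 ⊢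
        rwa [hKinv k] at h1
      exact closure_minimal this hKclosed
    · exact ⟨y, subset_closure (mem_zOrbit_self _ y)⟩
    · exact isClosed_closure
    · rw [image_closure_zOrbit f (n : ℤ) n y, ← he]
      have h3 : (e ^ (n : ℤ)) y = ((e ^ n) ^ (1 : ℤ)) y := by rw [pow_zpow, mul_one]
      rw [h3, zOrbit_zpow]
  -- get a minimal set N inside K
  obtain ⟨N, hNK, hNne, hNcl, hNcmp, hNinv, hNmin⟩ :=
    exists_minimal (hpow f (n : ℤ)) hKclosed hKcmp hKne hKg
  rw [show (hpow f (n:ℤ)).toEquiv = e ^ (n : ℤ) from rfl] at hNinv hNmin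
  have hNmul : ∀ k : ℤ, ⇑(e ^ ((n : ℤ) * k)) '' N = N := image_mul_eq e (n : ℤ) hNinv
  -- the union N' of the first n iterates of N
  set N' : Set X := ⋃ i : Fin n, ⇑(e ^ ((i : ℕ) : ℤ)) '' N with hN'
  set M := closure (zOrbit e x) with hM
  have hKM : K ⊆ M := by
    apply closure_mono
    rintro - ⟨k, rfl⟩
    exact ⟨(n : ℤ) * k, by show (e ^ ((n:ℤ)*k)) x = ((e ^ n) ^ k) x; rw [pow_zpow]⟩
  have hMinv : ∀ i : ℤ, ⇑(e ^ i) '' M = M := by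
    intro i
    rw [hM, image_closure_zOrbit_one f i x, zOrbit_zpow]
  have hN'M : N' ⊆ M := by
    refine Set.iUnion_subset fun i => ?_
    rw [← hMinv ((i : ℕ) : ℤ)]
    exact Set.image_mono (hNK.trans hKM)
  have hN'cl : IsClosed N' := isClosed_iUnion_of_finite fun i =>
    (hpow f ((i : ℕ) : ℤ)).isClosedMap _ hNcl
  -- any power image of N lands in N'
  have claim1 : ∀ j : ℤ, ⇑(e ^ j) '' N = ⇑(e ^ (j % (n : ℤ))) '' N := by
    intro j
    conv_lhs => rw [← Int.emod_add_mul_ediv j (n : ℤ)]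
    rw [image_zpow_add, image_mul_eq e (n : ℤ) hNinv (j / (n : ℤ))]
  have claim2 : ∀ j : ℤ, ⇑(e ^ j) '' N ⊆ N' := by
    intro j
    rw [claim1]
    have hnn : (0 : ℤ) ≤ j % (n : ℤ) := Int.emod_nonneg j (by exact_mod_cast hn.ne')
    have hlt : (j % (n : ℤ)).toNat < n := by
      have := Int.emod_lt_of_pos j (by exact_mod_cast hn : (0:ℤ) < (n:ℤ))
      omega
    refine Set.subset_iUnion_of_subset ⟨(j % (n : ℤ)).toNat, hlt⟩ ?_
    rw [show (((j % (n : ℤ)).toNat : ℕ) : ℤ) = j % (n : ℤ) from Int.toNat_of_nonneg hnn]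
  have claim3 : ∀ z ∈ N', ∀ k : ℤ, (e ^ k) z ∈ N' := by
    rintro z hz k
    obtain ⟨i, w, hw, rfl⟩ := Set.mem_iUnion.mp hz
    have : (e ^ k) ((e ^ ((i : ℕ) : ℤ)) w) ∈ ⇑(e ^ (k + ((i : ℕ) : ℤ))) '' N := by
      rw [image_zpow_add]
      exact ⟨(e ^ ((i : ℕ) : ℤ)) w, ⟨w, hw, rfl⟩, rfl⟩
    exact claim2 _ this
  -- N' = M by f-minimality of M
  have hMN' : M ⊆ N' := by
    obtain ⟨z, hz⟩ : N'.Nonempty := by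
      obtain ⟨w, hw⟩ := hNne
      exact ⟨(e ^ ((0 : ℕ) : ℤ)) w, Set.mem_iUnion.mpr ⟨⟨0, hn⟩, w, hw, rfl⟩⟩
    have hzM : z ∈ M := hN'M hz
    have : closure (zOrbit e z) = M := rclosed_min f hf hzM
    rw [← this]
    refine closure_minimal ?_ hN'cl
    rintro - ⟨k, rfl⟩
    exact claim3 z hz k
  -- x belongs to some iterate of N
  have hxN' : x ∈ N' := hMN' (subset_closure (mem_zOrbit_self e x))
  obtain ⟨i₀, hxP⟩ := Set.mem_iUnion.mp hxN'
  set i : ℤ := ((i₀ : ℕ) : ℤ)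
  set P : Set X := ⇑(e ^ i) '' N with hP
  have hPcl : IsClosed P := (hpow f i).isClosedMap _ hNcl
  have hPinv : ⇑(e ^ (n : ℤ)) '' P = P := by
    rw [hP, image_comm e (n : ℤ) i, hNinv]
  have hPmul : ∀ k : ℤ, ⇑(e ^ ((n : ℤ) * k)) '' P = P := image_mul_eq e (n : ℤ) hPinv
  have hKP : K ⊆ P := by
    refine closure_minimal ?_ hPcl
    rintro - ⟨k, rfl⟩
    show ((e ^ n) ^ k) x ∈ P
    have h1 : ((e ^ n) ^ k) x ∈ ⇑((e ^ n) ^ k) '' P := ⟨x, hxP, rfl⟩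
    rw [pow_zpow] at h1 ⊢
    rwa [hPmul k] at h1
  -- finish: compare preimages inside N
  intro A hAK hAne hAcl hAinv
  have hback : ∀ B : Set X, B ⊆ K → B.Nonempty → IsClosed B → ⇑(e ^ (n : ℤ)) '' B = B →
      ⇑(e ^ (-i)) '' B = N := by
    intro B hBK hBne hBcl hBinv
    apply hNmin
    · have : ⇑(e ^ (-i)) '' B ⊆ ⇑(e ^ (-i)) '' P := Set.image_mono (hBK.trans hKP)
      rwa [hP, ← image_zpow_add, neg_add_cancel, zpow_zero, Equiv.Perm.coe_one,
        Set.image_id] at this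
    · exact hBne.image _
    · exact (hpow f (-i)).isClosedMap _ hBcl
    · rw [image_comm e (n : ℤ) (-i), hBinv]
  have h1 : ⇑(e ^ (-i)) '' A = N := hback A hAK hAne hAcl hAinv
  have h2 : ⇑(e ^ (-i)) '' K = N := hback K subset_rfl hKne hKclosed hKg
  have := congrArg (fun S => ⇑(e ^ i) '' S) (h1.trans h2.symm)
  simpa only [image_cancel] using this


lemma zK_inv (f : X ≃ₜ X) (n : ℕ) (x : X) (k : ℤ) :
    ⇑(f.toEquiv ^ ((n : ℤ) * k)) '' closure (zOrbit (f.toEquiv ^ n) x)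
      = closure (zOrbit (f.toEquiv ^ n) x) := by
  rw [image_closure_zOrbit f ((n : ℤ) * k) n x]
  have h2 : (f.toEquiv ^ ((n : ℤ) * k)) x = ((f.toEquiv ^ n) ^ k) x := by rw [pow_zpow]
  rw [h2, zOrbit_zpow]

lemma exists_pos_forall (k : ℕ) (P : ℝ → ℕ → Prop)
    (hmono : ∀ j δ δ', 0 < δ' → δ' ≤ δ → P δ j → P δ' j)
    (h : ∀ j < k, ∃ δ, 0 < δ ∧ P δ j) : ∃ δ, 0 < δ ∧ ∀ j < k, P δ j := by
  induction k with
  | zero => exact ⟨1, one_pos, fun j hj => absurd hj (Nat.not_lt_zero j)⟩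
  | succ k ih =>
      obtain ⟨δ₁, hδ₁, h₁⟩ := ih (fun j hj => h j (hj.trans (Nat.lt_succ_self k)))
      obtain ⟨δ₂, hδ₂, h₂⟩ := h k (Nat.lt_succ_self k)
      refine ⟨min δ₁ δ₂, lt_min hδ₁ hδ₂, fun j hj => ?_⟩
      rcases Nat.lt_succ_iff_lt_or_eq.mp hj with hj' | rfl
      · exact hmono j δ₁ _ (lt_min hδ₁ hδ₂) (min_le_left _ _) (h₁ j hj')
      · exact hmono j δ₂ _ (lt_min hδ₁ hδ₂) (min_le_right _ _) h₂


lemma zK_inv' (f : X ≃ₜ X) (n : ℕ) (x : X) (k : ℤ) :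
    ⇑(f.toEquiv ^ ((n : ℤ) * k)) '' closure (zOrbit (f.toEquiv ^ n) x)
      = closure (zOrbit (f.toEquiv ^ n) x) := by
  rw [image_closure_zOrbit f ((n : ℤ) * k) n x]
  have h2 : (f.toEquiv ^ ((n : ℤ) * k)) x = ((f.toEquiv ^ n) ^ k) x := by rw [pow_zpow]
  rw [h2, zOrbit_zpow]

lemma emod_toNat_lt {m : ℕ} (hm : 0 < m) (j : ℤ) : (j % (m : ℤ)).toNat < m := by
  have h1 := Int.emod_lt_of_pos j (by exact_mod_cast hm : (0:ℤ) < (m:ℤ))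
  have h2 := Int.emod_nonneg j (by exact_mod_cast hm.ne' : (m:ℤ) ≠ 0)
  omega

lemma emod_toNat_succ {m : ℕ} (hm : 0 < m) (j : ℤ) :
    ((j + 1) % (m : ℤ)).toNat = ((j % (m : ℤ)).toNat + 1) % m := by
  have h1 := Int.emod_lt_of_pos j (by exact_mod_cast hm : (0:ℤ) < (m:ℤ))
  have h2 := Int.emod_nonneg j (by exact_mod_cast hm.ne' : (m:ℤ) ≠ 0)
  have hkey : (j + 1) % (m : ℤ) = (j % (m : ℤ) + 1) % (m : ℤ) := by
    conv_lhs => rw [← Int.emod_add_mul_ediv j (m : ℤ)]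
    rw [add_right_comm, Int.add_mul_emod_self_left]
  rcases eq_or_lt_of_le (by omega : j % (m : ℤ) + 1 ≤ (m : ℤ)) with h | h
  · rw [hkey, h, Int.emod_self]
    have : (j % (m : ℤ)).toNat + 1 = m := by omega
    rw [this, Nat.mod_self]
    rfl
  · rw [hkey, Int.emod_eq_of_lt (by omega) h,
      Nat.mod_eq_of_lt (by omega : (j % (m : ℤ)).toNat + 1 < m)]
    omega
  
lemma mod_succ_inj {m a b : ℕ} (ha : a < m) (hb : b < m)
    (h : (a + 1) % m = (b + 1) % m) : a = b := by
  have ha' : (a + 1) % m = if a + 1 = m then 0 else a + 1 := by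
    split
    · simp [*]
    · exact Nat.mod_eq_of_lt (by omega)
  have hb' : (b + 1) % m = if b + 1 = m then 0 else b + 1 := by
    split
    · simp [*]
    · exact Nat.mod_eq_of_lt (by omega)
  rw [ha', hb'] at h
  split at h <;> split at h <;> omega

end LStab

open LStab in
/-- If a homeomorphism `f` of a compact metrizable space is R-closed, then the orbit
relation of every positive iterate `fⁿ` is L-stable: for every `x` and every open set `U`
containing `closure (O_{fⁿ}(x))` there is an open set `V`, saturated for the orbit relation
of `fⁿ`, with `closure (O_{fⁿ}(x)) ⊆ V ⊆ U`. -/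
theorem pow_L_stable_of_rclosed {X : Type*} [TopologicalSpace X] [CompactSpace X]
    [TopologicalSpace.MetrizableSpace X] (f : X ≃ₜ X) (hf : RClosed f.toEquiv)
    (n : ℕ) (hn : 0 < n) (x : X) (U : Set X) (hU : IsOpen U)
    (hKU : closure (zOrbit (f.toEquiv ^ n) x) ⊆ U) :
    ∃ V : Set X, IsOpen V ∧ closure (zOrbit (f.toEquiv ^ n) x) ⊆ V ∧ V ⊆ U ∧
      ∀ y ∈ V, zOrbit (f.toEquiv ^ n) y ⊆ V := by
  classical
  letI : MetricSpace X := TopologicalSpace.metrizableSpaceMetric X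
  set e := f.toEquiv with he
  set K := closure (zOrbit (e ^ n) x) with hK
  have hxK : x ∈ K := subset_closure (mem_zOrbit_self _ x)
  have hKcl : IsClosed K := isClosed_closure
  have hKcmp : IsCompact K := hKcl.isCompact
  -- the minimal period m of the set K under e, with m ∣ n
  set Q : ℕ → Prop := fun d => 0 < d ∧ ⇑(e ^ (d : ℤ)) '' K = K with hQdef
  have hQn : Q n := ⟨hn, by simpa using zK_inv' f n x 1⟩
  obtain ⟨m, ⟨hmpos, hmK⟩, hmmin⟩ : ∃ m, Q m ∧ ∀ d < m, ¬ Q d := by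
    have hQex : ∃ d, Q d := ⟨n, hQn⟩
    exact ⟨Nat.find hQex, Nat.find_spec hQex, fun d hd => Nat.find_min hQex hd⟩
  have hmn : m ≤ n := by
    by_contra hc
    exact hmmin n (by omega) hQn
  have hmmul : ∀ k : ℤ, ⇑(e ^ ((m : ℤ) * k)) '' K = K := image_mul_eq e (m : ℤ) hmK
  have hdvd : m ∣ n := by
    have hnK : ⇑(e ^ (n : ℤ)) '' K = K := by simpa using zK_inv' f n x 1
    have hrK : ⇑(e ^ ((n % m : ℕ) : ℤ)) '' K = K := by
      have hsplit : ((n : ℤ)) = ((n % m : ℕ) : ℤ) + (m : ℤ) * ((n / m : ℕ) : ℤ) := by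
        exact_mod_cast (Nat.mod_add_div n m).symm
      rw [hsplit, image_zpow_add, hmmul] at hnK
      exact hnK
    have : n % m = 0 := by
      by_contra hne
      exact hmmin (n % m) (Nat.mod_lt n hmpos) ⟨Nat.pos_of_ne_zero hne, hrK⟩
    exact Nat.dvd_of_mod_eq_zero this
  -- the iterated copies of K
  set C : ℕ → Set X := fun d => ⇑(e ^ (d : ℤ)) '' K with hCdef
  have hC0 : C 0 = K := by simp [hCdef]
  have hCcmp : ∀ d, IsCompact (C d) := fun d => hKcmp.image (continuous_perm_zpow f _)
  have hCcl : ∀ d, IsClosed (C d) := fun d => (hCcmp d).isClosed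
  have hCeq : ∀ d : ℕ, C d = closure (zOrbit (e ^ n) ((e ^ (d : ℤ)) x)) := by
    intro d
    rw [hCdef]
    simpa [← he] using image_closure_zOrbit f (d : ℤ) n x
  -- distinct copies below m are pairwise disjoint
  have hCdisj : ∀ a < m, ∀ b < m, a ≠ b → Disjoint (C a) (C b) := by
    intro a ha b hb hab
    rw [Set.disjoint_left]
    intro z hza hzb
    have h1 : closure (zOrbit (e ^ n) z) = C a := by
      rw [hCeq a] at hza ⊢
      exact rclosed_pow_min f hf n hn _ hza
    have h2 : closure (zOrbit (e ^ n) z) = C b := by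
      rw [hCeq b] at hzb ⊢
      exact rclosed_pow_min f hf n hn _ hzb
    have hCab : C a = C b := h1 ▸ h2
    -- derive invariance by a nonzero shift smaller than m
    have hshift : ⇑(e ^ (-(b : ℤ) + (a : ℤ))) '' K = K := by
      have := congrArg (Set.image ⇑(e ^ (-(b : ℤ)))) hCab
      rw [hCdef] at this
      simp only [← image_zpow_add] at this
      simpa using this
    set d0 : ℤ := -(b : ℤ) + (a : ℤ) with hd0
    have hdnat : ⇑(e ^ ((d0.natAbs : ℕ) : ℤ)) '' K = K := by
      rcases Int.natAbs_eq d0 with h | h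
      · rw [← h]; exact hshift
      · have : ((d0.natAbs : ℕ) : ℤ) = -d0 := by omega
        rw [this]
        exact image_inv_eq e d0 hshift
    have hpos : 0 < d0.natAbs := by
      simp only [hd0]
      omega
    have hlt : d0.natAbs < m := by
      simp only [hd0]
      omega
    exact hmmin _ hlt ⟨hpos, hdnat⟩
  -- choose a uniform thickening radius δ
  obtain ⟨δU, hδU, hδUsub⟩ := hKcmp.exists_thickening_subset_open hU hKU
  obtain ⟨δ₁, hδ₁, hδ₁disj⟩ : ∃ δ, 0 < δ ∧ ∀ a < m, ∀ b < m, a ≠ b →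
      Disjoint (Metric.thickening δ (C a)) (Metric.thickening δ (C b)) := by
    apply exists_pos_forall m
      (fun δ a => ∀ b < m, a ≠ b → Disjoint (Metric.thickening δ (C a)) (Metric.thickening δ (C b)))
    · intro a δ δ' hδ' hle hP b hb hab
      exact (hP b hb hab).mono (Metric.thickening_mono hle _) (Metric.thickening_mono hle _)
    · intro a ha
      apply exists_pos_forall m
        (fun δ b => a ≠ b → Disjoint (Metric.thickening δ (C a)) (Metric.thickening δ (C b)))
      · intro b δ δ' hδ' hle hP hab
        exact (hP hab).mono (Metric.thickening_mono hle _) (Metric.thickening_mono hle _)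
      · intro b hb
        by_cases hab : a = b
        · exact ⟨1, one_pos, fun h => absurd h (by simp [hab])⟩
        · obtain ⟨δ, hδ, hd⟩ := (hCdisj a ha b hb hab).exists_thickenings (hCcmp a) (hCcl b)
          exact ⟨δ, hδ, fun _ => hd⟩
  set δ : ℝ := min δ₁ δU with hδdef
  have hδpos : 0 < δ := lt_min hδ₁ hδU
  set O : ℕ → Set X := fun d => Metric.thickening δ (C d) with hOdef
  have hOopen : ∀ d, IsOpen (O d) := fun d => Metric.isOpen_thickening
  have hCO : ∀ d, C d ⊆ O d := fun d => Metric.self_subset_thickening hδpos _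
  have hO0U : O 0 ⊆ U := by
    rw [hOdef]
    refine (Metric.thickening_mono (min_le_right _ _) _).trans ?_
    rw [hC0]
    exact hδUsub
  have hOdisj : ∀ a < m, ∀ b < m, a ≠ b → Disjoint (O a) (O b) := by
    intro a ha b hb hab
    exact (hδ₁disj a ha b hb hab).mono (Metric.thickening_mono (min_le_left _ _) _)
      (Metric.thickening_mono (min_le_left _ _) _)
  -- the cyclic open pattern
  set Ω : Set X := ⋃ d ∈ Finset.range m, (O d ∩ ⇑f ⁻¹' O ((d + 1) % m)) with hΩdef
  have hΩopen : IsOpen Ω := isOpen_iUnion fun d => isOpen_iUnion fun _ =>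
    (hOopen d).inter ((hOopen _).preimage f.continuous)
  -- each C d (d < m) sits inside the corresponding piece
  have hCsucc : ∀ d < m, ∀ z ∈ C d, f z ∈ C ((d + 1) % m) := by
    intro d hd z hz
    obtain ⟨w, hw, rfl⟩ := hz
    have hfz : f ((e ^ (d : ℤ)) w) = (e ^ ((d + 1 : ℕ) : ℤ)) w := by
      have h1 : (e ^ (1 : ℤ)) ((e ^ (d : ℤ)) w) = (e ^ ((1 : ℤ) + (d : ℤ))) w :=
        zpow_apply_zpow e 1 (d : ℤ) w
      have h2 : ((d + 1 : ℕ) : ℤ) = (1 : ℤ) + (d : ℤ) := by push_cast; ring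
      rw [h2, ← h1, zpow_one]
      rfl
    rw [hfz]
    rcases Nat.lt_or_ge (d + 1) m with h | h
    · rw [Nat.mod_eq_of_lt h]
      exact ⟨w, hw, rfl⟩
    · have hdm : d + 1 = m := by omega
      have hz0 : ((d + 1) % m) = 0 := by rw [hdm, Nat.mod_self]
      rw [hz0, hC0, ← hmK, hdm]
      exact ⟨w, hw, rfl⟩
  have hCΩ : ∀ d < m, C d ⊆ Ω := by
    intro d hd z hz
    rw [hΩdef]
    refine Set.mem_biUnion (Finset.mem_range.mpr hd) ⟨hCO d hz, ?_⟩
    exact hCO _ (hCsucc d hd z hz)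
  -- the full orbit closure of x is contained in Ω
  set M : Set X := closure (zOrbit e x) with hMdef
  have hKM : K ⊆ M := by
    apply closure_mono
    rintro - ⟨k, rfl⟩
    exact ⟨(n : ℤ) * k, by show (e ^ ((n : ℤ) * k)) x = ((e ^ n) ^ k) x; rw [pow_zpow]⟩
  have hMΩ : M ⊆ Ω := by
    have hD : M ⊆ ⋃ d ∈ Finset.range m, C d := by
      refine closure_minimal ?_ (isClosed_biUnion_finset fun d _ => hCcl d)
      rintro - ⟨k, rfl⟩
      have hr0 : (0 : ℤ) ≤ k % (m : ℤ) := Int.emod_nonneg k (by exact_mod_cast hmpos.ne')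
      have hrlt : (k % (m : ℤ)).toNat < m := emod_toNat_lt hmpos k
      refine Set.mem_biUnion (Finset.mem_range.mpr hrlt) ?_
      show (e ^ k) x ∈ ⇑(e ^ (((k % (m : ℤ)).toNat : ℕ) : ℤ)) '' K
      have hcast : (((k % (m : ℤ)).toNat : ℕ) : ℤ) = k % (m : ℤ) := Int.toNat_of_nonneg hr0
      rw [hcast]
      have hsplit : (e ^ k) x = (e ^ (k % (m : ℤ))) ((e ^ ((m : ℤ) * (k / (m : ℤ)))) x) := by
        rw [zpow_apply_zpow, Int.emod_add_mul_ediv k (m : ℤ)]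
      rw [hsplit]
      refine ⟨_, ?_, rfl⟩
      rw [← hmmul (k / (m : ℤ))]
      exact ⟨x, hxK, rfl⟩
    refine hD.trans ?_
    refine Set.iUnion₂_subset fun d hd => hCΩ d (Finset.mem_range.mp hd)
  -- the saturated open set
  set V : Set X := O 0 ∩ {y : X | closure (zOrbit e y) ⊆ Ω} with hVdef
  refine ⟨V, ?_, ?_, ?_, ?_⟩
  · exact (hOopen 0).inter (usc hf hΩopen)
  · -- K ⊆ V
    intro y hy
    refine ⟨hCO 0 (by rw [hC0]; exact hy), ?_⟩
    show closure (zOrbit e y) ⊆ Ω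
    have : closure (zOrbit e y) = M := rclosed_min f hf (hKM hy)
    rw [this]
    exact hMΩ
  · exact (Set.inter_subset_left).trans hO0U
  · -- saturation
    intro y hy
    obtain ⟨hyO, hyΩ⟩ := hy
    have hyΩ' : closure (zOrbit e y) ⊆ Ω := hyΩ
    have horb : ∀ j : ℤ, (e ^ j) y ∈ Ω := fun j => hyΩ' (subset_closure ⟨j, rfl⟩)
    have hpiece : ∀ j : ℤ, ∃ d, d < m ∧ (e ^ j) y ∈ O d ∧
        f ((e ^ j) y) ∈ O ((d + 1) % m) := by
      intro j
      have := horb j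
      rw [hΩdef] at this
      obtain ⟨d, hd, h1, h2⟩ := Set.mem_iUnion₂.mp this
      exact ⟨d, Finset.mem_range.mp hd, h1, h2⟩
    -- the key trajectory claim
    have key : ∀ j : ℤ, (e ^ j) y ∈ O ((j % (m : ℤ)).toNat) := by
      intro j
      induction j using Int.induction_on with
      | zero => simpa using hyO
      | succ i ih =>
          obtain ⟨d, hd, hmemO, hmemP⟩ := hpiece (i : ℤ)
          have hieq : d = ((i : ℤ) % (m : ℤ)).toNat := by
            by_contra hne
            exact (hOdisj d hd _ (emod_toNat_lt hmpos (i : ℤ)) hne).ne_of_mem hmemO ih rfl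
          have hstep : (e ^ ((i : ℤ) + 1)) y = f ((e ^ (i : ℤ)) y) := by
            have h1 : (e ^ (1 : ℤ)) ((e ^ (i : ℤ)) y) = (e ^ ((1 : ℤ) + (i : ℤ))) y :=
              zpow_apply_zpow e 1 (i : ℤ) y
            rw [add_comm ((i : ℤ)) 1, ← h1, zpow_one]
            rfl
          have hidx : (((i : ℤ) + 1) % (m : ℤ)).toNat = (d + 1) % m := by
            rw [emod_toNat_succ hmpos (i : ℤ), hieq]
          rw [hstep, hidx]
          exact hmemP
      | pred i ih =>
          obtain ⟨d, hd, hmemO, hmemP⟩ := hpiece (-(i : ℤ) - 1)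
          have hstep : f ((e ^ (-(i : ℤ) - 1)) y) = (e ^ (-(i : ℤ))) y := by
            have h1 : (e ^ (1 : ℤ)) ((e ^ (-(i : ℤ) - 1)) y) = (e ^ ((1:ℤ) + (-(i : ℤ) - 1))) y :=
              zpow_apply_zpow e 1 _ y
            have h2 : (1:ℤ) + (-(i : ℤ) - 1) = -(i : ℤ) := by ring
            rw [h2] at h1
            rw [← h1, zpow_one]
            rfl
          rw [hstep] at hmemP
          have h1m : (d + 1) % m < m := Nat.mod_lt _ hmpos
          have hieq : (d + 1) % m = ((-(i : ℤ)) % (m : ℤ)).toNat := by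
            by_contra hne
            exact (hOdisj _ h1m _ (emod_toNat_lt hmpos _) hne).ne_of_mem hmemP ih rfl
          have h2 : ((-(i : ℤ)) % (m : ℤ)).toNat = (((-(i : ℤ) - 1) % (m : ℤ)).toNat + 1) % m := by
            have := emod_toNat_succ hmpos (-(i : ℤ) - 1)
            rw [sub_add_cancel] at this
            exact this
          have hfin : d = ((-(i : ℤ) - 1) % (m : ℤ)).toNat :=
            mod_succ_inj hd (emod_toNat_lt hmpos _) (by rw [hieq, h2])
          exact hfin ▸ hmemO
    -- conclude
    rintro - ⟨k, rfl⟩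
    show ((e ^ n) ^ k) y ∈ V
    have hz : ((e ^ n) ^ k) y = (e ^ ((n : ℤ) * k)) y := by rw [pow_zpow]
    rw [hz]
    constructor
    · have hkey := key ((n : ℤ) * k)
      obtain ⟨c, rfl⟩ := hdvd
      have hzero : (((m * c : ℕ) : ℤ) * k) % (m : ℤ) = 0 := by
        have hmc : (((m * c : ℕ) : ℤ) * k) = (m : ℤ) * ((c : ℤ) * k) := by push_cast; ring
        rw [hmc]
        exact Int.mul_emod_right _ _
      rw [hzero] at hkey
      simpa using hkey
    · show closure (zOrbit e ((e ^ ((n : ℤ) * k)) y)) ⊆ Ω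
      rw [zOrbit_zpow]
      exact hyΩ'
end

section
/- There exist a compact T₁ topological space X and a homeomorphism f : X → X such that f is R-closed but f ∘ f (the second iterate f²) is not R-closed. (For example, one may take X to be the non-Hausdorff one-dimensional space obtained from two copies of [0,1] by identifying corresponding points t for all t ∈ (0,1], so that X has two origins 0₋ and 0₊, and f the homeomorphism that swaps 0₋ and 0₊ and is the identity on (0,1]; then f² is the identity, whose orbit relation is the diagonal, which is not closed since X is not Hausdorff.) -/
/-- ℕ with two points at infinity. -/
abbrev Xs : Type := Bool ⊕ ℕ

namespace Xs

instance : TopologicalSpace Xs where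
  IsOpen U := (∃ b, Sum.inl b ∈ U) → {n : ℕ | Sum.inr n ∉ U}.Finite
  isOpen_univ := by intro _; simp
  isOpen_inter := by
    rintro U V hU hV ⟨b, hb⟩
    refine ((hU ⟨b, hb.1⟩).union (hV ⟨b, hb.2⟩)).subset ?_
    intro n hn
    simp only [Set.mem_setOf_eq, Set.mem_inter_iff, Set.mem_union] at *
    tauto
  isOpen_sUnion := by
    rintro S hS ⟨b, hb⟩
    rcases Set.mem_sUnion.1 hb with ⟨U, hU, hbU⟩
    refine (hS U hU ⟨b, hbU⟩).subset ?_
    intro n hn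
    simp only [Set.mem_setOf_eq] at *
    exact fun h => hn (Set.mem_sUnion.2 ⟨U, hU, h⟩)

lemma isOpen_iff {U : Set Xs} :
    IsOpen U ↔ ((∃ b, Sum.inl b ∈ U) → {n : ℕ | Sum.inr n ∉ U}.Finite) := Iff.rfl

lemma isOpen_singleton_inr (n : ℕ) : IsOpen ({Sum.inr n} : Set Xs) := by
  rw [isOpen_iff]; rintro ⟨b, hb⟩; simp at hb

lemma isOpen_compl_inr (n : ℕ) : IsOpen ({Sum.inr n}ᶜ : Set Xs) := by
  rw [isOpen_iff]
  rintro ⟨b, hb⟩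
  refine Set.Finite.subset (Set.finite_singleton n) ?_
  intro m hm
  simp only [Set.mem_setOf_eq, Set.mem_compl_iff, not_not, Set.mem_singleton_iff] at hm ⊢
  exact Sum.inr.inj hm

instance : T1Space Xs := by
  constructor
  intro x
  rw [← isOpen_compl_iff, isOpen_iff]
  rintro ⟨b, hb⟩
  cases x with
  | inl c =>
      refine Set.Finite.subset (Set.finite_empty) ?_
      intro n hn
      simp at hn
  | inr m =>
      refine Set.Finite.subset (Set.finite_singleton m) ?_
      intro n hn
      simp only [Set.mem_setOf_eq, Set.mem_compl_iff, not_not, Set.mem_singleton_iff] at hn ⊢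
      exact Sum.inr.inj hn

instance : CompactSpace Xs := by
  rw [← isCompact_univ_iff]
  classical
  refine isCompact_of_finite_subcover fun {ι} U hU hcov => ?_
  obtain ⟨i₀, hi₀⟩ := Set.mem_iUnion.1 (hcov (Set.mem_univ (Sum.inl true)))
  obtain ⟨i₁, hi₁⟩ := Set.mem_iUnion.1 (hcov (Set.mem_univ (Sum.inl false)))
  have hfin : {n : ℕ | Sum.inr n ∉ U i₀}.Finite := (hU i₀) ⟨true, hi₀⟩
  choose g hg using fun n : ℕ => Set.mem_iUnion.1 (hcov (Set.mem_univ (Sum.inr n)))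
  refine ⟨insert i₀ (insert i₁ (hfin.toFinset.image g)), ?_⟩
  intro x _
  simp only [Set.mem_iUnion, Finset.mem_insert, Finset.mem_image, Set.Finite.mem_toFinset,
    Set.mem_setOf_eq, exists_prop]
  cases x with
  | inl b =>
      cases b with
      | true => exact ⟨i₀, Or.inl rfl, hi₀⟩
      | false => exact ⟨i₁, Or.inr (Or.inl rfl), hi₁⟩
  | inr n =>
      by_cases hn : Sum.inr n ∈ U i₀
      · exact ⟨i₀, Or.inl rfl, hn⟩
      · exact ⟨g n, Or.inr (Or.inr ⟨n, hn, rfl⟩), hg n⟩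

/-- The swap of the two points at infinity. -/
def swapEquiv : Equiv.Perm Xs where
  toFun := Sum.map Bool.not id
  invFun := Sum.map Bool.not id
  left_inv x := by cases x <;> simp
  right_inv x := by cases x <;> simp

lemma swap_inl (b : Bool) : swapEquiv (Sum.inl b) = Sum.inl (!b) := rfl
lemma swap_inr (n : ℕ) : swapEquiv (Sum.inr n) = Sum.inr n := rfl

lemma preimage_swap (U : Set Xs) :
    {n : ℕ | Sum.inr n ∉ swapEquiv ⁻¹' U} = {n : ℕ | Sum.inr n ∉ U} := by
  ext n; simp [swap_inr]

lemma continuous_swap : Continuous (swapEquiv : Xs → Xs) := by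
  constructor
  intro U hU
  rw [isOpen_iff]
  rintro ⟨b, hb⟩
  rw [preimage_swap]
  exact hU ⟨!b, hb⟩

def swapHomeo : Xs ≃ₜ Xs where
  toEquiv := swapEquiv
  continuous_toFun := continuous_swap
  continuous_invFun := continuous_swap

lemma swap_sq : swapEquiv ^ 2 = 1 := by
  ext x
  cases x with
  | inl b => cases b <;> rfl
  | inr n => rfl

end Xs

lemma zOrbit_of_sq_one {X : Type*} {g : Equiv.Perm X} (h : g ^ 2 = 1) (x : X) :
    zOrbit g x = {x, g x} := by
  ext y
  simp only [Set.mem_insert_iff, Set.mem_singleton_iff]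
  constructor
  · rintro ⟨k, rfl⟩
    rcases Int.even_or_odd k with ⟨m, hm⟩ | ⟨m, hm⟩
    · left
      have hk : g ^ k = 1 := by
        rw [hm, ← two_mul, zpow_mul]
        norm_cast
        rw [h, one_zpow]
      show (g ^ k) x = x
      rw [hk]; rfl
    · right
      have hk : g ^ k = g := by
        rw [hm, zpow_add, zpow_mul, zpow_one]
        norm_cast
        rw [h, one_zpow, one_mul]
      show (g ^ k) x = g x
      rw [hk]
  · rintro (rfl | rfl)
    · exact ⟨0, rfl⟩
    · exact ⟨1, by simp⟩

lemma zOrbit_one {X : Type*} (x : X) : zOrbit (1 : Equiv.Perm X) x = {x} := by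
  ext y
  constructor
  · rintro ⟨k, rfl⟩; simp
  · rintro rfl; exact ⟨0, rfl⟩

open Xs in
/-- There exist a compact T₁ space `X` and a homeomorphism `f : X ≃ₜ X` such that `f` is
R-closed but its second iterate `f²` is not R-closed. -/
theorem exists_compact_t1_rclosed_sq_not_rclosed :
    ∃ (X : Type) (t : TopologicalSpace X) (f : @Homeomorph X X t t),
      @CompactSpace X t ∧ @T1Space X t ∧ @RClosed X t f.toEquiv ∧
        ¬ @RClosed X t (f.toEquiv ^ 2) := by
  refine ⟨Xs, inferInstance, swapHomeo, inferInstance, inferInstance, ?_, ?_⟩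
  · -- swap is R-closed
    have horb : ∀ x : Xs, closure (zOrbit swapEquiv x) = {x, swapEquiv x} := by
      intro x
      rw [zOrbit_of_sq_one swap_sq]
      exact IsClosed.closure_eq ((Set.finite_singleton (swapEquiv x)).insert x).isClosed
    show IsClosed {p : Xs × Xs | p.2 ∈ closure (zOrbit swapEquiv p.1)}
    rw [← isOpen_compl_iff, isOpen_prod_iff]
    intro a b hab
    simp only [Set.mem_compl_iff, Set.mem_setOf_eq, horb, Set.mem_insert_iff,
      Set.mem_singleton_iff, not_or] at hab
    obtain ⟨hb1, hb2⟩ := hab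
    cases a with
    | inl c =>
        cases b with
        | inl c' =>
            exfalso
            rw [swap_inl] at hb2
            cases c <;> cases c' <;> simp_all
        | inr m =>
            refine ⟨{Sum.inr m}ᶜ, {Sum.inr m}, isOpen_compl_inr m,
              isOpen_singleton_inr m, ?_, rfl, ?_⟩
            · simp
            · rintro ⟨u, v⟩ ⟨hu, hv⟩
              simp only [Set.mem_compl_iff, Set.mem_singleton_iff] at hu hv
              subst hv
              simp only [Set.mem_compl_iff, Set.mem_setOf_eq, horb, Set.mem_insert_iff,
                Set.mem_singleton_iff, not_or]
              refine ⟨fun h => hu h.symm, fun h => ?_⟩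
              exact hu (swapEquiv.injective (h.symm.trans (swap_inr m).symm))
    | inr n =>
        refine ⟨{Sum.inr n}, {Sum.inr n}ᶜ, isOpen_singleton_inr n,
          isOpen_compl_inr n, rfl, ?_, ?_⟩
        · intro h
          exact hb1 h
        · rintro ⟨u, v⟩ ⟨hu, hv⟩
          simp only [Set.mem_singleton_iff] at hu
          simp only [Set.mem_compl_iff, Set.mem_singleton_iff] at hv
          subst hu
          simp only [Set.mem_compl_iff, Set.mem_setOf_eq, horb, Set.mem_insert_iff,
            Set.mem_singleton_iff, not_or, swap_inr]
          exact ⟨hv, hv⟩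
  · -- swap² = 1 is not R-closed
    intro hcl
    have h1 : (swapHomeo.toEquiv ^ 2 : Equiv.Perm Xs) = 1 := swap_sq
    have hcl' : IsClosed {p : Xs × Xs | p.2 ∈ closure (zOrbit (1 : Equiv.Perm Xs) p.1)} := by
      rw [← h1]; exact hcl
    have hdiag : {p : Xs × Xs | p.2 ∈ closure (zOrbit (1 : Equiv.Perm Xs) p.1)}
        = {p : Xs × Xs | p.2 = p.1} := by
      ext p
      simp [zOrbit_one, closure_singleton]
    rw [hdiag] at hcl'
    have hmem : (Sum.inl true, Sum.inl false) ∈ ({p : Xs × Xs | p.2 = p.1} : Set (Xs × Xs))ᶜ := by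
      intro h
      exact Bool.noConfusion (Sum.inl.inj h)
    obtain ⟨U, V, hUo, hVo, hU, hV, hUV⟩ :=
      isOpen_prod_iff.1 hcl'.isOpen_compl _ _ hmem
    have hUf := (Xs.isOpen_iff.1 hUo) ⟨true, hU⟩
    have hVf := (Xs.isOpen_iff.1 hVo) ⟨false, hV⟩
    obtain ⟨n, hn⟩ := ((hUf.union hVf).infinite_compl).nonempty
    simp only [Set.mem_compl_iff, Set.mem_union, Set.mem_setOf_eq, not_or, not_not] at hn
    exact hUV (Set.mk_mem_prod hn.1 hn.2) rfl
end
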